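/- arXiv:2507.00708 — 2 statements merged into one kernel-verified Lean document; each statement's English description precedes it below -/
import Mathlib

section
/- In the hardness reduction graph H built from a planar graph G of girth at least 7, if M is a MEG-set of H of size at most k + |V(G)| + 1, then M ∩ V(G) is a dominating set of G of size at most k. -/
/-- Edge `e` is monitored by the pair `x, y` if `x ≠ y` and `e` lies on
every shortest path between `x` and `y`. -/
def Monitors {V : Type*} (G : SimpleGraph V) (x y : V) (e : Sym2 V) : Prop :=
  x ≠ y ∧ ∀ p : G.Walk x y, p.length = G.dist x y → e ∈ p.edges

/-- `M` is a monitoring edge-geodetic set of `G`. -/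
def IsMEGSet {V : Type*} (G : SimpleGraph V) (M : Set V) : Prop :=
  ∀ e ∈ G.edgeSet, ∃ x ∈ M, ∃ y ∈ M, Monitors G x y e

/-- Vertices of the hardness-reduction graph `H` built from `G`:
`orig v` is the original vertex `v`, `pend1 v = v'`, `pend2 v = v''`,
`star = v*` and `starp = v*'`. -/
inductive HV (V : Type*) where
  | orig : V → HV V
  | pend1 : V → HV V
  | pend2 : V → HV V
  | star : HV V
  | starp : HV V

/-- The (asymmetric) base relation describing the edges of `H`. -/
def hRel {V : Type*} (G : SimpleGraph V) : HV V → HV V → Prop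
  | .orig u, .orig v => G.Adj u v
  | .orig u, .pend1 v => u = v
  | .pend1 u, .pend2 v => u = v
  | .pend1 _, .star => True
  | .star, .starp => True
  | _, _ => False

/-- The hardness-reduction graph `H`: `G` with a pendant path `v–v'–v''`
attached to each vertex `v`, a vertex `v*` adjacent to every `v'`, and a
pendant vertex `v*'` adjacent to `v*`. -/
def hGraph {V : Type*} (G : SimpleGraph V) : SimpleGraph (HV V) :=
  SimpleGraph.fromRel (hRel G)

/-- `L'' = {v'' : v ∈ V(G)}`. -/
def Lpp (V : Type*) : Set (HV V) := {v | ∃ u, v = HV.pend2 u}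

section Helpers

open SimpleGraph Walk

variable {V : Type*}

/-- Encoding of `HV V` used for decidability and finiteness. -/
def HV.code : HV V → (V ⊕ V ⊕ V ⊕ Bool)
  | .orig u => Sum.inl u
  | .pend1 u => Sum.inr (Sum.inl u)
  | .pend2 u => Sum.inr (Sum.inr (Sum.inl u))
  | .star => Sum.inr (Sum.inr (Sum.inr true))
  | .starp => Sum.inr (Sum.inr (Sum.inr false))

lemma HV.code_injective : Function.Injective (HV.code (V := V)) := by
  intro a b h
  cases a <;> cases b <;> simp_all [HV.code]

instance [DecidableEq V] : DecidableEq (HV V) := fun a b =>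
  decidable_of_iff _ HV.code_injective.eq_iff

instance [Finite V] : Finite (HV V) := Finite.of_injective _ HV.code_injective

variable (G : SimpleGraph V)

lemma hAdj {a b : HV V} : (hGraph G).Adj a b ↔ a ≠ b ∧ (hRel G a b ∨ hRel G b a) :=
  SimpleGraph.fromRel_adj _ _ _

lemma adj_orig_pend1 (u : V) : (hGraph G).Adj (.orig u) (.pend1 u) :=
  (hAdj G).2 ⟨by simp, Or.inl rfl⟩

lemma adj_pend1_star (u : V) : (hGraph G).Adj (.pend1 u) .star :=
  (hAdj G).2 ⟨by simp, Or.inl trivial⟩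

lemma adj_pend1_pend2 (u : V) : (hGraph G).Adj (.pend1 u) (.pend2 u) :=
  (hAdj G).2 ⟨by simp, Or.inl rfl⟩

lemma adj_star_starp : (hGraph G).Adj (.star : HV V) .starp :=
  (hAdj G).2 ⟨by simp, Or.inl trivial⟩

/-- The potential function: distance to `star`. -/
def fH : HV V → ℕ
  | .orig _ => 2
  | .pend1 _ => 1
  | .pend2 _ => 2
  | .star => 0
  | .starp => 1

lemma fH_adj {a b : HV V} (h : (hGraph G).Adj a b) : fH b ≤ fH a + 1 := by
  rw [hAdj] at h
  obtain ⟨-, h⟩ := h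
  cases a <;> cases b <;> simp_all [hRel, fH]

lemma fH_le {a b : HV V} (p : (hGraph G).Walk a b) : fH b ≤ fH a + p.length := by
  induction p with
  | nil => simp
  | cons h q ih =>
    have := fH_adj G h
    simp only [Walk.length_cons]
    omega

/-- The canonical walk to `star`. -/
def walkToStar : (a : HV V) → (hGraph G).Walk a .star
  | .orig u => .cons (adj_orig_pend1 G u) (.cons (adj_pend1_star G u) .nil)
  | .pend1 u => .cons (adj_pend1_star G u) .nil
  | .pend2 u => .cons (adj_pend1_pend2 G u).symm (.cons (adj_pend1_star G u) .nil)
  | .star => .nil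
  | .starp => .cons (adj_star_starp G).symm .nil

lemma walkToStar_length (a : HV V) : (walkToStar G a).length = fH a := by
  cases a <;> rfl

lemma walkToStar_edges {v : V} (a : HV V) (ha : a ≠ HV.orig v) :
    s(HV.orig v, HV.pend1 v) ∉ (walkToStar G a).edges := by
  cases a <;> simp_all [walkToStar, Sym2.eq_iff] <;> exact fun h => ha h.symm

lemma hReach (x y : HV V) : (hGraph G).Reachable x y :=
  ⟨(walkToStar G x).append (walkToStar G y).reverse⟩

/-- A shortest path exists between any two vertices of `H`. -/
lemma exists_shortest [DecidableEq V] (x y : HV V) :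
    ∃ p : (hGraph G).Walk x y, p.IsPath ∧ p.length = (hGraph G).dist x y := by
  obtain ⟨p0, hp0⟩ := (hReach G x y).exists_walk_length_eq_dist
  refine ⟨p0.bypass, p0.bypass_isPath, le_antisymm ?_ ((hGraph G).dist_le _)⟩
  exact hp0 ▸ p0.length_bypass_le

/-- A path containing a pendant edge has the leaf as an endpoint. -/
lemma leaf_edge {W : Type*} {H : SimpleGraph W} {a w : W}
    (hw : ∀ z, H.Adj w z → z = a) {x y : W} (p : H.Walk x y) (hp : p.IsPath)
    (he : s(a, w) ∈ p.edges) : w = x ∨ w = y := by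
  induction p with
  | nil => simp at he
  | @cons x' c y' h q ih =>
    rw [Walk.edges_cons, List.mem_cons] at he
    rcases he with he | he
    · rw [Sym2.eq_iff] at he
      rcases he with ⟨hax, rfl⟩ | ⟨hac, hwx⟩
      · cases q with
        | nil => exact Or.inr rfl
        | @cons _ z _ h' q' =>
          exfalso
          have hz : z = x' := (hw _ h').trans hax
          apply ((Walk.cons_isPath_iff _ _).1 hp).2
          rw [← hz]
          exact List.mem_cons_of_mem _ q'.start_mem_support
      · exact Or.inl hwx
    · rcases ih hp.of_cons he with rfl | hy
      · exfalso
        have hxa : x' = a := hw _ h.symm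
        have hmem : a ∈ q.support := q.fst_mem_support_of_mem_edges he
        rw [← hxa] at hmem
        exact ((Walk.cons_isPath_iff _ _).1 hp).2 hmem
      · exact Or.inr hy

/-- `x` dominates `v` in the sense needed. -/
def GoodFor (v : V) (x : HV V) : Prop := ∃ u, (u = v ∨ G.Adj u v) ∧ x = HV.orig u

lemma notGood_length {v : V} {a : HV V} (hg : ¬ GoodFor G v a)
    (q : (hGraph G).Walk a (.orig v)) : fH a ≤ q.length := by
  cases q with
  | nil => exact absurd ⟨v, Or.inl rfl, rfl⟩ hg
  | @cons _ c _ h q' =>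
    cases q' with
    | nil =>
      cases a with
      | orig u =>
        rw [hAdj] at h
        obtain ⟨-, h⟩ := h
        simp only [hRel] at h
        exact absurd ⟨u, Or.inr (h.elim id fun h' => h'.symm), rfl⟩ hg
      | pend2 u =>
        rw [hAdj] at h
        obtain ⟨-, h⟩ := h
        simp [hRel] at h
      | pend1 u => simp [fH]
      | star => simp [fH]
      | starp => simp [fH]
    | cons h'' q'' =>
      have : fH a ≤ 2 := by cases a <;> simp [fH]
      simp only [Walk.length_cons]
      omega

/-- A path from `orig v` containing the edge `(orig v, pend1 v)` has length at
least `fH` of its other end. -/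
lemma containsE_length {v : V} {c : HV V} (q : (hGraph G).Walk (.orig v) c)
    (hq : q.IsPath) (he : s(HV.orig v, HV.pend1 v) ∈ q.edges) : fH c ≤ q.length := by
  cases q with
  | nil => simp at he
  | @cons _ w _ h q' =>
    rw [Walk.edges_cons, List.mem_cons] at he
    rcases he with he | he
    · rw [Sym2.eq_iff] at he
      rcases he with ⟨-, hw⟩ | ⟨-, hw⟩
      · subst hw
        have := fH_le G q'
        simp only [Walk.length_cons, fH] at this ⊢
        omega
      · exact absurd hw (by simp)
    · exfalso
      have : HV.orig v ∈ q'.support := q'.fst_mem_support_of_mem_edges he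
      exact ((Walk.cons_isPath_iff _ _).1 hq).2 this

lemma key_length [DecidableEq V] {v : V} {x y : HV V} (hx : ¬ GoodFor G v x)
    (hy : ¬ GoodFor G v y) (p : (hGraph G).Walk x y) (hp : p.IsPath)
    (he : s(HV.orig v, HV.pend1 v) ∈ p.edges) : fH x + fH y ≤ p.length := by
  have hsup : HV.orig v ∈ p.support := p.fst_mem_support_of_mem_edges he
  have hspec := p.take_spec hsup
  have hlen : p.length = (p.takeUntil _ hsup).length + (p.dropUntil _ hsup).length := by
    conv_lhs => rw [← hspec]
    rw [Walk.length_append]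
  have ht : (p.takeUntil _ hsup).IsPath := hp.takeUntil hsup
  have hd : (p.dropUntil _ hsup).IsPath := hp.dropUntil hsup
  have he' : s(HV.orig v, HV.pend1 v) ∈ (p.takeUntil _ hsup).edges ∨
      s(HV.orig v, HV.pend1 v) ∈ (p.dropUntil _ hsup).edges := by
    rw [← List.mem_append, ← Walk.edges_append, hspec]
    exact he
  rcases he' with h1 | h2
  · have h1' : s(HV.orig v, HV.pend1 v) ∈ (p.takeUntil _ hsup).reverse.edges := by
      rw [Walk.edges_reverse, List.mem_reverse]; exact h1
    have hbx : fH x ≤ (p.takeUntil _ hsup).reverse.length :=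
      containsE_length G _ ht.reverse h1'
    have hby : fH y ≤ (p.dropUntil _ hsup).reverse.length :=
      notGood_length G hy (p.dropUntil _ hsup).reverse
    rw [Walk.length_reverse] at hbx hby
    omega
  · have hbx : fH x ≤ (p.takeUntil _ hsup).length := notGood_length G hx _
    have hby : fH y ≤ (p.dropUntil _ hsup).length := containsE_length G _ hd h2
    omega

end Helpers

/-- If `M` is a MEG-set of `H` of size at most `k + |V(G)| + 1`, then
`M ∩ V(G)` is a dominating set of `G` of size at most `k`. -/
theorem megset_to_dominatingSet {V : Type*} [Fintype V] [DecidableEq V]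
    (G : SimpleGraph V) (hcard : 2 ≤ Fintype.card V) (hgirth : 7 ≤ G.girth)
    (k : ℕ) (M : Set (HV V)) (hM : IsMEGSet (hGraph G) M)
    (hsize : M.ncard ≤ k + Fintype.card V + 1) :
    (∀ v : V, v ∈ {u : V | HV.orig u ∈ M} ∨
        ∃ u ∈ {u : V | HV.orig u ∈ M}, G.Adj u v) ∧
    {u : V | HV.orig u ∈ M}.ncard ≤ k := by
  constructor
  · -- domination
    intro v
    have hedge : s(HV.orig v, HV.pend1 v) ∈ (hGraph G).edgeSet :=
      ((hGraph G).mem_edgeSet).2 (adj_orig_pend1 G v)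
    obtain ⟨x, hxM, y, hyM, hne, hmon⟩ := hM _ hedge
    have hgood : GoodFor G v x ∨ GoodFor G v y := by
      by_contra hng
      push_neg at hng
      obtain ⟨hgx, hgy⟩ := hng
      obtain ⟨p, hpp, hpl⟩ := exists_shortest G x y
      have he := hmon p hpl
      have hb : fH x + fH y ≤ (hGraph G).dist x y := hpl ▸ key_length G hgx hgy p hpp he
      set W : (hGraph G).Walk x y := (walkToStar G x).append (walkToStar G y).reverse with hW
      have hWlen : W.length = fH x + fH y := by
        rw [hW, SimpleGraph.Walk.length_append, SimpleGraph.Walk.length_reverse,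
          walkToStar_length, walkToStar_length]
      have hWd : W.length = (hGraph G).dist x y :=
        le_antisymm (hWlen ▸ hb) ((hGraph G).dist_le W)
      have heW := hmon W hWd
      have hxo : x ≠ HV.orig v := fun h => hgx ⟨v, Or.inl rfl, h⟩
      have hyo : y ≠ HV.orig v := fun h => hgy ⟨v, Or.inl rfl, h⟩
      rw [hW, SimpleGraph.Walk.edges_append, List.mem_append] at heW
      rcases heW with h | h
      · exact walkToStar_edges G x hxo h
      · rw [SimpleGraph.Walk.edges_reverse, List.mem_reverse] at h
        exact walkToStar_edges G y hyo h
    rcases hgood with ⟨u, hu, hxu⟩ | ⟨u, hu, hyu⟩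
    · subst hxu
      rcases hu with rfl | hadj
      · exact Or.inl hxM
      · exact Or.inr ⟨u, hxM, hadj⟩
    · subst hyu
      rcases hu with rfl | hadj
      · exact Or.inl hyM
      · exact Or.inr ⟨u, hyM, hadj⟩
  · -- counting
    have hpend : ∀ u : V, HV.pend2 u ∈ M := by
      intro u
      have hedge : s(HV.pend1 u, HV.pend2 u) ∈ (hGraph G).edgeSet :=
        ((hGraph G).mem_edgeSet).2 (adj_pend1_pend2 G u)
      obtain ⟨x, hxM, y, hyM, hne, hmon⟩ := hM _ hedge
      obtain ⟨p, hpp, hpl⟩ := exists_shortest G x y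
      have he := hmon p hpl
      have hw : ∀ z, (hGraph G).Adj (HV.pend2 u) z → z = HV.pend1 u := by
        intro z hz
        rw [hAdj] at hz
        obtain ⟨-, hz⟩ := hz
        cases z <;> simp_all [hRel]
      rcases leaf_edge hw p hpp he with h | h
      · exact h ▸ hxM
      · exact h ▸ hyM
    have hstarp : (HV.starp : HV V) ∈ M := by
      have hedge : s((HV.star : HV V), HV.starp) ∈ (hGraph G).edgeSet :=
        ((hGraph G).mem_edgeSet).2 (adj_star_starp G)
      obtain ⟨x, hxM, y, hyM, hne, hmon⟩ := hM _ hedge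
      obtain ⟨p, hpp, hpl⟩ := exists_shortest G x y
      have he := hmon p hpl
      have hw : ∀ z, (hGraph G).Adj HV.starp z → z = (HV.star : HV V) := by
        intro z hz
        rw [hAdj] at hz
        obtain ⟨-, hz⟩ := hz
        cases z <;> simp_all [hRel]
      rcases leaf_edge hw p hpp he with h | h
      · exact h ▸ hxM
      · exact h ▸ hyM
    -- assemble the count
    set S : Set V := {u : V | HV.orig u ∈ M} with hS
    set A : Set (HV V) := insert HV.starp ((fun u => HV.pend2 u) '' Set.univ) with hA
    set B : Set (HV V) := HV.orig '' S with hB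
    have hAM : A ⊆ M := by
      rintro a (rfl | ⟨u, -, rfl⟩)
      · exact hstarp
      · exact hpend u
    have hBM : B ⊆ M := by rintro a ⟨u, hu, rfl⟩; exact hu
    have hdisj : Disjoint A B := by
      rw [Set.disjoint_left]
      rintro a (rfl | ⟨u, -, rfl⟩) ⟨w, -, hw⟩ <;> exact absurd hw (by simp)
    have hABM : A ∪ B ⊆ M := Set.union_subset hAM hBM
    have hMfin : M.Finite := Set.toFinite M
    have hcardA : A.ncard = Fintype.card V + 1 := by
      rw [hA, Set.ncard_insert_of_notMem (by rintro ⟨u, -, h⟩; exact absurd h (by simp))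
        (Set.toFinite _)]
      rw [Set.ncard_image_of_injective _ (fun a b h => by simpa using h)]
      rw [Set.ncard_univ, Nat.card_eq_fintype_card]
    have hcardB : B.ncard = S.ncard :=
      Set.ncard_image_of_injective _ (fun a b h => by simpa using h)
    have hle : A.ncard + B.ncard ≤ M.ncard := by
      rw [← Set.ncard_union_eq hdisj (Set.toFinite _) (Set.toFinite _)]
      exact Set.ncard_le_ncard hABM hMfin
    rw [hcardA, hcardB] at hle
    omega
end

section
/- In the hardness reduction graph H, for any edge (u,v) of the original graph G (girth ≥ 7) where neither u nor v is in the dominating set D, if x,y ∈ D dominate u and v respectively, then x ≠ y and d_H(x,y) = 3, and the pair {x,y} monitors (u,v) in H. -/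
section helpers
open SimpleGraph

lemma cyc_len {V : Type*} {G : SimpleGraph V} (h : 7 ≤ G.girth) {a : V}
    (w : G.Walk a a) (hw : w.IsCycle) : 7 ≤ w.length := by
  have h1 : G.egirth ≤ w.length := le_egirth.mp le_rfl a w hw
  have h2 : G.egirth ≠ ⊤ := fun ht => by simp [ht] at h1
  have h3 := ENat.coe_toNat h2
  rw [SimpleGraph.girth] at h
  have h4 : (7 : ℕ∞) ≤ G.egirth := by rw [← h3]; exact_mod_cast h
  exact_mod_cast h4.trans h1

lemma no3 {V : Type*} {G : SimpleGraph V} (h : 7 ≤ G.girth) {a b c : V}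
    (h1 : G.Adj a b) (h2 : G.Adj b c) (h3 : G.Adj c a) : False := by
  have n1 := h1.ne; have n2 := h2.ne; have n3 := h3.ne
  have hw : (SimpleGraph.Walk.cons h1 (.cons h2 (.cons h3 .nil))).IsCycle := by
    constructor
    · exact ⟨by simp [Walk.isTrail_def, List.Nodup]; tauto, by simp⟩
    · simp [List.Nodup]; tauto
  have := cyc_len h _ hw
  simp at this

lemma no4 {V : Type*} {G : SimpleGraph V} (h : 7 ≤ G.girth) {a b c d : V}
    (h1 : G.Adj a b) (h2 : G.Adj b c) (h3 : G.Adj c d) (h4 : G.Adj d a)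
    (hac : a ≠ c) (hbd : b ≠ d) : False := by
  have n1 := h1.ne; have n2 := h2.ne; have n3 := h3.ne; have n4 := h4.ne
  have hw : (SimpleGraph.Walk.cons h1 (.cons h2 (.cons h3 (.cons h4 .nil)))).IsCycle := by
    constructor
    · exact ⟨by simp [Walk.isTrail_def, List.Nodup]; tauto, by simp⟩
    · simp [List.Nodup]; tauto
  have := cyc_len h _ hw
  simp at this

lemma no5 {V : Type*} {G : SimpleGraph V} (h : 7 ≤ G.girth) {a b c d e : V}
    (h1 : G.Adj a b) (h2 : G.Adj b c) (h3 : G.Adj c d) (h4 : G.Adj d e) (h5 : G.Adj e a)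
    (hac : a ≠ c) (had : a ≠ d) (hbd : b ≠ d) (hbe : b ≠ e) (hce : c ≠ e) : False := by
  have n1 := h1.ne; have n2 := h2.ne; have n3 := h3.ne; have n4 := h4.ne; have n5 := h5.ne
  have hw : (SimpleGraph.Walk.cons h1 (.cons h2 (.cons h3 (.cons h4 (.cons h5 .nil))))).IsCycle := by
    constructor
    · exact ⟨by simp [Walk.isTrail_def, List.Nodup]; tauto, by simp⟩
    · simp [List.Nodup]; tauto
  have := cyc_len h _ hw
  simp at this

lemma no6 {V : Type*} {G : SimpleGraph V} (h : 7 ≤ G.girth) {a b c d e f : V}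
    (h1 : G.Adj a b) (h2 : G.Adj b c) (h3 : G.Adj c d) (h4 : G.Adj d e) (h5 : G.Adj e f)
    (h6 : G.Adj f a)
    (hac : a ≠ c) (had : a ≠ d) (hae : a ≠ e) (hbd : b ≠ d) (hbe : b ≠ e) (hbf : b ≠ f)
    (hce : c ≠ e) (hcf : c ≠ f) (hdf : d ≠ f) : False := by
  have n1 := h1.ne; have n2 := h2.ne; have n3 := h3.ne; have n4 := h4.ne; have n5 := h5.ne
  have n6 := h6.ne
  have hw : (SimpleGraph.Walk.cons h1 (.cons h2 (.cons h3 (.cons h4 (.cons h5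
      (.cons h6 .nil)))))).IsCycle := by
    constructor
    · exact ⟨by simp [Walk.isTrail_def, List.Nodup]; tauto, by simp⟩
    · simp [List.Nodup]; tauto
  have := cyc_len h _ hw
  simp at this

lemma horig {V : Type*} {G : SimpleGraph V} {a b : V} :
    (hGraph G).Adj (HV.orig a) (HV.orig b) ↔ G.Adj a b := by
  simp only [hGraph, SimpleGraph.fromRel_adj, hRel]
  constructor
  · rintro ⟨h, h1 | h1⟩
    · exact h1
    · exact h1.symm
  · intro h
    exact ⟨by simp [h.ne], Or.inl h⟩


end helpers

/-- For an edge `(u,v)` of `G` (girth ≥ 7) with neither endpoint in the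
dominating set `D`, if `x, y ∈ D` dominate `u` and `v` respectively, then
`x ≠ y`, `d_H(x,y) = 3`, and the pair `{x, y}` monitors `(u,v)` in `H`. -/
theorem dominators_monitor_edge {V : Type*} [Fintype V] [DecidableEq V]
    (G : SimpleGraph V) (hgirth : 7 ≤ G.girth)
    (D : Set V) (hdom : ∀ w : V, w ∈ D ∨ ∃ d ∈ D, G.Adj d w)
    (u v : V) (huv : G.Adj u v) (hu : u ∉ D) (hv : v ∉ D)
    (x y : V) (hx : x ∈ D) (hy : y ∈ D) (hxu : G.Adj x u) (hyv : G.Adj y v) :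
    x ≠ y ∧ (hGraph G).dist (HV.orig x) (HV.orig y) = 3 ∧
      Monitors (hGraph G) (HV.orig x) (HV.orig y) s(HV.orig u, HV.orig v) := by
  have hxune : x ≠ u := fun h => hu (h ▸ hx)
  have hxvne : x ≠ v := fun h => hv (h ▸ hx)
  have hyune : y ≠ u := fun h => hu (h ▸ hy)
  have hyvne : y ≠ v := fun h => hv (h ▸ hy)
  have hxy : x ≠ y := by
    rintro rfl
    exact no3 hgirth hxu huv hyv.symm
  have hnxy : ¬ G.Adj x y := fun hadj =>
    no4 hgirth hxu huv hyv.symm hadj.symm hxvne hyune.symm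
  -- key analysis of all walks
  have key : ∀ p : (hGraph G).Walk (HV.orig x) (HV.orig y),
      3 ≤ p.length ∧ (p.length = 3 → s(HV.orig u, HV.orig v) ∈ p.edges) := by
    intro p
    cases p with
    | nil => exact absurd rfl hxy
    | cons h1 q =>
      rename_i a
      cases q with
      | nil => exact absurd (horig.mp h1) hnxy
      | cons h2 r =>
        rename_i b
        cases r with
        | nil =>
          -- length-2 walk x - a - y : impossible
          exfalso
          cases a with
          | orig a' =>
            have ha1 := horig.mp h1
            have ha2 := horig.mp h2
            by_cases hau : a' = u
            · subst hau
              exact no3 hgirth huv hyv.symm ha2.symm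
            · by_cases hav : a' = v
              · subst hav
                exact no3 hgirth hxu huv ha1.symm
              · exact no5 hgirth hxu huv hyv.symm ha2.symm ha1.symm
                  hxvne hxy (fun h => hyune h.symm) (fun h => hau h.symm)
                  (fun h => hav h.symm)
          | pend1 a' =>
            simp only [hGraph, SimpleGraph.fromRel_adj, hRel] at h1 h2
            obtain ⟨-, h1 | h1⟩ := h1 <;> obtain ⟨-, h2 | h2⟩ := h2 <;>
              first | exact h1 | exact h2 | exact hxy (h1.trans h2.symm)
          | pend2 a' => simp [hGraph, SimpleGraph.fromRel_adj, hRel] at h1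
          | star => simp [hGraph, SimpleGraph.fromRel_adj, hRel] at h1
          | starp => simp [hGraph, SimpleGraph.fromRel_adj, hRel] at h1
        | cons h3 s =>
          rename_i c
          cases s with
          | cons h4 t =>
            constructor
            · simp only [SimpleGraph.Walk.length_cons]; omega
            · intro hlen; simp only [SimpleGraph.Walk.length_cons] at hlen; omega
          | nil =>
            refine ⟨by simp, fun _ => ?_⟩
            -- walk x - a - b - y of length 3
            suffices hab : a = HV.orig u ∧ b = HV.orig v by
              obtain ⟨rfl, rfl⟩ := hab
              simp [SimpleGraph.Walk.edges_cons]
            cases a with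
            | orig a' =>
              cases b with
              | orig b' =>
                have ha1 := horig.mp h1
                have ha2 := horig.mp h2
                have ha3 := horig.mp h3
                by_cases hbx : b' = x
                · exact absurd (hbx ▸ ha3) hnxy
                by_cases hau : a' = u
                · subst hau
                  by_cases hbv : b' = v
                  · exact ⟨rfl, by rw [hbv]⟩
                  · exact absurd (no4 hgirth ha2 ha3 hyv huv.symm hyune.symm hbv) not_false
                · exfalso
                  by_cases hbv : b' = v
                  · subst hbv
                    exact no4 hgirth hxu huv ha2.symm ha1.symm hxvne (Ne.symm hau)
                  · by_cases hav : a' = v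
                    · subst hav
                      exact no3 hgirth hxu huv ha1.symm
                    · by_cases hbu : b' = u
                      · subst hbu
                        exact no3 hgirth huv hyv.symm ha3.symm
                      · by_cases hay : a' = y
                        · exact hnxy (hay ▸ ha1)
                        · exact no6 hgirth hxu huv hyv.symm ha3.symm ha2.symm ha1.symm
                            hxvne hxy (fun h => hbx h.symm) hyune.symm
                            (fun h => hbu h.symm) (fun h => hau h.symm)
                            (fun h => hbv h.symm) (fun h => hav h.symm)
                            (fun h => hay h.symm)
              | pend1 b' =>
                exfalso
                simp only [hGraph, SimpleGraph.fromRel_adj, hRel] at h2 h3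
                obtain ⟨-, h2 | h2⟩ := h2 <;> obtain ⟨-, h3 | h3⟩ := h3 <;>
                  first | exact h2 | exact h3 |
                    (subst h2; subst h3; exact hnxy (horig.mp h1))
              | pend2 b' => simp [hGraph, SimpleGraph.fromRel_adj, hRel] at h3
              | star => simp [hGraph, SimpleGraph.fromRel_adj, hRel] at h3
              | starp => simp [hGraph, SimpleGraph.fromRel_adj, hRel] at h3
            | pend1 a' =>
              exfalso
              cases b with
              | orig b' =>
                simp only [hGraph, SimpleGraph.fromRel_adj, hRel] at h1 h2
                obtain ⟨-, h1 | h1⟩ := h1 <;> obtain ⟨-, h2 | h2⟩ := h2 <;>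
                  first | exact h1 | exact h2 |
                    (subst h1; subst h2; exact hnxy (horig.mp h3))
              | pend1 b' => simp [hGraph, SimpleGraph.fromRel_adj, hRel] at h2
              | pend2 b' => simp [hGraph, SimpleGraph.fromRel_adj, hRel] at h3
              | star => simp [hGraph, SimpleGraph.fromRel_adj, hRel] at h3
              | starp => simp [hGraph, SimpleGraph.fromRel_adj, hRel] at h2
            | pend2 a' => simp [hGraph, SimpleGraph.fromRel_adj, hRel] at h1
            | star => simp [hGraph, SimpleGraph.fromRel_adj, hRel] at h1
            | starp => simp [hGraph, SimpleGraph.fromRel_adj, hRel] at h1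
  have w0 : (hGraph G).Walk (HV.orig x) (HV.orig y) :=
    .cons (horig.mpr hxu) (.cons (horig.mpr huv) (.cons (horig.mpr hyv.symm) .nil))
  have hreach : (hGraph G).Reachable (HV.orig x) (HV.orig y) := ⟨w0⟩
  have hdist : (hGraph G).dist (HV.orig x) (HV.orig y) = 3 := by
    have hle : (hGraph G).dist (HV.orig x) (HV.orig y) ≤ 3 := by
      have h30 := SimpleGraph.dist_le
        (SimpleGraph.Walk.cons (horig.mpr hxu) (.cons (horig.mpr huv)
          (.cons (horig.mpr hyv.symm) .nil)))
      simpa using h30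
    have hge : 3 ≤ (hGraph G).dist (HV.orig x) (HV.orig y) := by
      obtain ⟨p, hp⟩ := hreach.exists_walk_length_eq_dist
      rw [← hp]
      exact (key p).1
    omega
  refine ⟨hxy, hdist, ?_, fun p hp => (key p).2 (by rw [hp, hdist])⟩
  simp [hxy]
end
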